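/- arXiv:2310.04190 — 3 statements merged into one kernel-verified Lean document; each statement's English description precedes it below -/
import Mathlib

section
/- Let f be an injective function mapping pairs (label, multiset of values) to values, and for a rooted labeled tree define ahu(v) = f(μ(v), {{ ahu(u) : u a child of v }}) bottom-up (so leaves get ahu(v) = f(μ(v), ∅)). Then for any two rooted labeled trees T_1 and T_2, ahu(r(T_1)) = ahu(r(T_2)) if and only if T_1 and T_2 are isomorphic as rooted labeled trees. -/
open scoped Classical

universe u v

/-- A rooted labeled (unordered) tree: a root label together with a list of
child subtrees.  The list order is irrelevant for the isomorphism relation. -/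
inductive LTree (L : Type u) : Type u
  | node : L → List (LTree L) → LTree L

namespace LTree

variable {L : Type u} {L' C : Type v}

/-- The label of the root. -/
def label : LTree L → L
  | node a _ => a

/-- The child subtrees of the root. -/
def children : LTree L → List (LTree L)
  | node _ ts => ts

/-- Isomorphism of rooted labeled trees: there is a bijection between the node
sets preserving the root, the parent–child relation and node labels; for our
representation this means equal root labels and children that correspond, up to
a permutation, to pairwise isomorphic subtrees. -/
inductive Iso : LTree L → LTree L → Prop
  | node (a : L) {ts us vs : List (LTree L)} :
      List.Forall₂ Iso ts vs → vs.Perm us → Iso (node a ts) (node a us)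

/-- `Embeds t s` : `t` is an induced rooted subtree of `s`, i.e. the nodes of
`t` inject into the nodes of `s` preserving the root, labels and the
parent–child relation. -/
inductive Embeds : LTree L → LTree L → Prop
  | node (a : L) {ts us vs : List (LTree L)} :
      List.Forall₂ Embeds ts vs → vs.Subperm us → Embeds (node a ts) (node a us)

/-- Number of nodes of a rooted tree. -/
def size : LTree L → ℕ
  | node _ ts => 1 + (ts.attach.map (fun c => size c.1)).sum
decreasing_by simp_wf; have := List.sizeOf_lt_of_mem c.2; omega

/-- Relabel a tree by `f`. -/
def map (f : L → L') : LTree L → LTree L'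
  | node a ts => node (f a) (ts.attach.map (fun c => map f c.1))
decreasing_by simp_wf; have := List.sizeOf_lt_of_mem c.2; omega

/-- Number of nodes of the tree carrying label `x`. -/
def countLabel [DecidableEq L] (x : L) : LTree L → ℕ
  | node a ts => (if a = x then 1 else 0) + (ts.attach.map (fun c => countLabel x c.1)).sum
decreasing_by simp_wf; have := List.sizeOf_lt_of_mem c.2; omega

/-- Number of nodes at depth `d` carrying label `x`. -/
def countAt [DecidableEq L] (x : L) : ℕ → LTree L → ℕ
  | 0, node a _ => if a = x then 1 else 0
  | d+1, node _ ts => (ts.attach.map (fun c => countAt x d c.1)).sum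
termination_by _ t => sizeOf t
decreasing_by simp_wf; have := List.sizeOf_lt_of_mem c.2; omega

/-- `SubtreeAt t d s` : `s` is the subtree of `t` rooted at one of the nodes of
`t` at depth `d`. -/
inductive SubtreeAt : LTree L → ℕ → LTree L → Prop
  | refl (t : LTree L) : SubtreeAt t 0 t
  | step {t c s : LTree L} {d : ℕ} : c ∈ t.children → SubtreeAt c d s → SubtreeAt t (d+1) s

/-- The AHU canonical value: `ahu f t = f (label t) {{ ahu f c | c child of t }}`,
computed bottom-up (a leaf gets `f (label) ∅`). -/
noncomputable def ahu (f : L → Multiset C → C) : LTree L → C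
  | node a ts => f a (↑(ts.attach.map (fun c => ahu f c.1)) : Multiset C)
decreasing_by simp_wf; have := List.sizeOf_lt_of_mem c.2; omega

end LTree

/-
The AHU value of a tree is, up to the injective `f`, its root label together with the
multiset of the AHU values of its children. By induction on the tree, AHU values of
subtrees are equal exactly when the subtrees are isomorphic; so two lists of children
have permutation-equivalent lists of AHU values exactly when some permutation of one
list matches the other child by child up to isomorphism, which is `Iso` one level up.
-/

namespace List

variable {α β : Type*} {g : α → β} {R : α → α → Prop} {ts us vs : List α}

theorem forall₂_iff_map_eq_map (hR : ∀ x ∈ ts, ∀ y, g x = g y ↔ R x y) :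
    Forall₂ R ts vs ↔ ts.map g = vs.map g := by
  induction ts generalizing vs with
  | nil => cases vs <;> simp
  | cons t ts ih =>
    cases vs with
    | nil => simp
    | cons v vs =>
      simp only [forall₂_cons, map_cons, cons.injEq, ← hR t mem_cons_self v]
      rw [ih fun x hx => hR x (mem_cons_of_mem t hx)]

theorem perm_map_iff_exists_forall₂_perm (hR : ∀ x ∈ ts, ∀ y, g x = g y ↔ R x y) :
    (ts.map g).Perm (us.map g) ↔ ∃ vs, Forall₂ R ts vs ∧ vs.Perm us := by
  constructor
  · intro h
    have hus : Forall₂ (fun b y => b = g y) (us.map g) us := by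
      simp [forall₂_map_left_iff, forall₂_same]
    obtain ⟨vs, hvs, hperm⟩ := perm_comp_forall₂ h hus
    refine ⟨vs, (forall₂_iff_map_eq_map hR).2 ?_, hperm⟩
    rw [← forall₂_eq_eq_eq, forall₂_map_left_iff, forall₂_map_right_iff]
    rwa [forall₂_map_left_iff] at hvs
  · rintro ⟨vs, hvs, hperm⟩
    rw [(forall₂_iff_map_eq_map hR).1 hvs]
    exact hperm.map g

end List

namespace LTree

variable {L : Type*} {C : Type*}

theorem ahu_node (f : L → Multiset C → C) (a : L) (ts : List (LTree L)) :
    ahu f (node a ts) = f a (ts.map (ahu f)) := by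
  rw [ahu, List.map_attach_eq_pmap, List.pmap_eq_map]

theorem iso_node_iff {a b : L} {ts us : List (LTree L)} :
    Iso (node a ts) (node b us) ↔ a = b ∧ ∃ vs, List.Forall₂ Iso ts vs ∧ vs.Perm us := by
  constructor
  · rintro ⟨a, hvs, hperm⟩
    exact ⟨rfl, _, hvs, hperm⟩
  · rintro ⟨rfl, vs, hvs, hperm⟩
    exact Iso.node a hvs hperm

end LTree

/-- For an injective function `f` mapping pairs (label,
multiset of values) to values, the bottom-up AHU encoding satisfies:
`ahu (r T₁) = ahu (r T₂)` iff `T₁` and `T₂` are isomorphic rooted labeled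
trees. -/
theorem ahu_eq_iff_iso {L : Type u} {C : Type v} (f : L → Multiset C → C)
    (hinj : ∀ a s b t, f a s = f b t → a = b ∧ s = t)
    (T₁ T₂ : LTree L) :
    LTree.ahu f T₁ = LTree.ahu f T₂ ↔ LTree.Iso T₁ T₂ := by
  obtain ⟨a, ts⟩ := T₁
  obtain ⟨b, us⟩ := T₂
  have ih : ∀ x ∈ ts, ∀ y, LTree.ahu f x = LTree.ahu f y ↔ LTree.Iso x y :=
    fun x _ y => ahu_eq_iff_iso f hinj x y
  have hf : ∀ a s b t, f a s = f b t ↔ a = b ∧ s = t :=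
    fun a s b t => ⟨hinj a s b t, fun ⟨hab, hst⟩ => hab ▸ hst ▸ rfl⟩
  rw [LTree.ahu_node, LTree.ahu_node, hf, Multiset.coe_eq_coe,
    List.perm_map_iff_exists_forall₂_perm ih, LTree.iso_node_iff]
termination_by sizeOf T₁
decreasing_by simp only [LTree.node.sizeOf_spec]; have := List.sizeOf_lt_of_mem ‹_›; omega
end

section
/- For every connected graph G, vertex v, vertex w, and height i ≥ d_G(v,w), every node of the 0-redundant neighborhood tree T_{i,0}^v representing w has depth exactly d_G(v,w), and the number of such nodes equals the number of shortest paths from v to w in G; moreover the map sending a node to the sequence of represented vertices on its path to the root is a bijection between nodes of T_{i,0}^v representing w and shortest v–w paths. -/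
open scoped Classical

universe u v

section Graph

variable {V : Type u} {X : Type v}

/-- The unfolding tree `F_i^v` of height `i` of the vertex `v`, with node labels
given by `μ` (a node representing the graph vertex `x` is labeled `μ x`). -/
noncomputable def SimpleGraph.unfoldingTree (G : SimpleGraph V) [Fintype V] (μ : V → X) :
    ℕ → V → LTree X
  | 0, u => .node (μ u) []
  | i+1, u => .node (μ u) ((G.neighborFinset u).toList.map (G.unfoldingTree μ i))

/-- Auxiliary recursion for `k`-redundant neighborhood trees: `r` is the root
vertex, `d` is the current depth and `x` the currently represented vertex.  A
neighbor `y` is kept at depth `d + 1` iff `d + 1 ≤ dist r y + k`; since the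
minimal depth at which `y` occurs in the unfolding tree rooted at `r` is
`dist r y`, this is exactly the pruning condition
`depth(u) ≤ depth(w) + k` for all nodes `w` with `φ(u) = φ(w)`. -/
noncomputable def SimpleGraph.ntAux (G : SimpleGraph V) [Fintype V] (μ : V → X)
    (r : V) (k : ℕ) : ℕ → ℕ → V → LTree X
  | 0, _, x => .node (μ x) []
  | i+1, d, x => .node (μ x)
      (((G.neighborFinset x).filter (fun y => d + 1 ≤ G.dist r y + k)).toList.map
        (G.ntAux μ r k i (d+1)))

/-- The `k`-redundant neighborhood tree `T_{i,k}^v` of height `i` of vertex `v`. -/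
noncomputable def SimpleGraph.ntTree (G : SimpleGraph V) [Fintype V] (μ : V → X)
    (i k : ℕ) (v : V) : LTree X :=
  G.ntAux μ v k i 0 v

end Graph

/-!
With `k = 0` a neighbour `y` of a node at depth `d` is kept exactly when `dist v y = d + 1`
(distances of adjacent vertices differ by at most one), so every node of `T_{i,0}^v`
representing `x` lies at depth `dist v x`. Below such a node, the nodes representing `w` at
depth `dist v w` follow the walks from `x` to `w` of length `dist v w - dist v x`: these walks
are shortest, so each of their steps moves one farther from `v` and is never pruned. Hence
their number is an entry of a power of the adjacency matrix, which counts walks, and walks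
from `v` to `w` of length `dist v w` are exactly the shortest paths.
-/

namespace LTree

variable {L : Type u} [DecidableEq L]

@[simp]
lemma countAt_node_zero (x a : L) (ts : List (LTree L)) :
    countAt x 0 (node a ts) = if a = x then 1 else 0 := by
  rw [countAt]

@[simp]
lemma countAt_node_succ (x a : L) (d : ℕ) (ts : List (LTree L)) :
    countAt x (d + 1) (node a ts) = (ts.map (countAt x d)).sum := by
  rw [countAt, List.map_attach_eq_pmap, List.pmap_eq_map]

end LTree

namespace SimpleGraph

variable {V : Type u} {G : SimpleGraph V}

section ntAux

variable {X : Type v} [Fintype V] [DecidableEq X] (μ : V → X) (r : V) (k : ℕ) (z : X)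

lemma countAt_zero_ntAux (i d : ℕ) (x : V) :
    (G.ntAux μ r k i d x).countAt z 0 = if μ x = z then 1 else 0 := by
  cases i <;> simp [ntAux]

lemma countAt_succ_ntAux_zero (m d : ℕ) (x : V) :
    (G.ntAux μ r k 0 d x).countAt z (m + 1) = 0 := by
  simp [ntAux]

lemma countAt_succ_ntAux_succ (m i d : ℕ) (x : V) :
    (G.ntAux μ r k (i + 1) d x).countAt z (m + 1)
      = ∑ y ∈ G.neighborFinset x with d + 1 ≤ G.dist r y + k,
          (G.ntAux μ r k i (d + 1) y).countAt z m := by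
  rw [ntAux, LTree.countAt_node_succ, List.map_map, Finset.sum_map_toList]
  rfl

end ntAux

variable [Fintype V]

lemma dist_eq_add_one_of_mem_filter_neighborFinset {r x y : V} {d : ℕ} (hx : G.dist r x = d)
    (hy : y ∈ {y ∈ G.neighborFinset x | d + 1 ≤ G.dist r y + 0}) : G.dist r y = d + 1 := by
  rw [Finset.mem_filter, mem_neighborFinset] at hy
  rcases hy.1.diff_dist_adj (u := r) with h | h | h <;> omega

variable [DecidableEq V] {v w : V}

lemma add_eq_dist_of_countAt_ntAux_ne_zero {x : V} {i d m : ℕ} (hx : G.dist v x = d)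
    (hm : (G.ntAux id v 0 i d x).countAt w m ≠ 0) : d + m = G.dist v w :=
  match i, m with
  | _, 0 => by
    rw [countAt_zero_ntAux] at hm
    grind
  | 0, _ + 1 => absurd (countAt_succ_ntAux_zero ..) hm
  | i + 1, m + 1 => by
    rw [countAt_succ_ntAux_succ] at hm
    obtain ⟨y, hy, hym⟩ := Finset.exists_ne_zero_of_sum_ne_zero hm
    have := add_eq_dist_of_countAt_ntAux_ne_zero
      (dist_eq_add_one_of_mem_filter_neighborFinset hx hy) hym
    omega

lemma adjMatrix_pow_apply_eq_zero_of_add_lt_dist {y : V} {m : ℕ}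
    (h : G.dist v y + m < G.dist v w) : (G.adjMatrix ℕ ^ m) y w = 0 := by
  rw [adjMatrix_pow_apply_eq_card_walk, Nat.cast_eq_zero, Fintype.card_eq_zero_iff]
  refine ⟨fun ⟨q, hq⟩ => ?_⟩
  have := q.reachable.dist_triangle_right v
  have := dist_le q
  rw [Set.mem_ofPred_eq] at hq
  omega

lemma countAt_ntAux_eq_adjMatrix_pow_apply {x : V} {m i d : ℕ} (hx : G.dist v x = d)
    (hw : d + m = G.dist v w) (hmi : m ≤ i) :
    (G.ntAux id v 0 i d x).countAt w m = (G.adjMatrix ℕ ^ m) x w := by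
  induction m generalizing i d x with
  | zero => rw [countAt_zero_ntAux, pow_zero, Matrix.one_apply, id]
  | succ m ih =>
    obtain ⟨i, rfl⟩ : ∃ j, i = j + 1 := ⟨i - 1, by omega⟩
    rw [countAt_succ_ntAux_succ, pow_succ', adjMatrix_mul_apply]
    refine Finset.sum_subset_zero_on_sdiff (Finset.filter_subset _ _) ?_ ?_
    · intro y hy
      rw [Finset.mem_sdiff, Finset.mem_filter, not_and, not_le] at hy
      exact adjMatrix_pow_apply_eq_zero_of_add_lt_dist (v := v) (by have := hy.2 hy.1; omega)
    · intro y hy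
      exact ih (dist_eq_add_one_of_mem_filter_neighborFinset hx hy) (by omega) (by omega)

end SimpleGraph

theorem ntTree_zero_counts_shortest_paths_general {V : Type u} [Fintype V] [DecidableEq V]
    (G : SimpleGraph V) (v w : V) (i : ℕ)
    (hi : G.dist v w ≤ i) :
    (∀ d : ℕ, LTree.countAt w d (G.ntTree id i 0 v) ≠ 0 → d = G.dist v w) ∧
    LTree.countAt w (G.dist v w) (G.ntTree id i 0 v)
        = Nat.card {p : G.Walk v w // p.IsPath ∧ p.length = G.dist v w} := by
  refine ⟨fun d hd => ?_, ?_⟩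
  · simpa using G.add_eq_dist_of_countAt_ntAux_ne_zero G.dist_self hd
  · rw [SimpleGraph.ntTree,
      G.countAt_ntAux_eq_adjMatrix_pow_apply G.dist_self (zero_add _) hi,
      SimpleGraph.adjMatrix_pow_apply_eq_card_walk, Nat.cast_id, ← Nat.card_eq_fintype_card]
    exact Nat.card_congr <| Equiv.subtypeEquivRight fun p =>
      ⟨fun h => ⟨p.isPath_of_length_eq_dist h, h⟩, And.right⟩

/-- For every connected graph `G`, vertices `v, w` and height
`i ≥ d_G(v,w)`, every node of the 0-redundant neighborhood tree `T_{i,0}^v`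
representing `w` has depth exactly `d_G(v,w)`, and the number of such nodes
equals the number of shortest `v`–`w` paths (the nodes correspond bijectively
to the shortest paths).  (Vertex labels `id`.) -/
theorem ntTree_zero_counts_shortest_paths {V : Type u} [Fintype V] [DecidableEq V]
    (G : SimpleGraph V) (hG : G.Connected) (v w : V) (i : ℕ)
    (hi : G.dist v w ≤ i) :
    (∀ d : ℕ, LTree.countAt w d (G.ntTree id i 0 v) ≠ 0 → d = G.dist v w) ∧
    LTree.countAt w (G.dist v w) (G.ntTree id i 0 v)
        = Nat.card {p : G.Walk v w // p.IsPath ∧ p.length = G.dist v w} :=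
  ntTree_zero_counts_shortest_paths_general G v w i hi
end

section
/- For every graph G with n vertices and m edges and every height h, there exists a merge DAG (D, ξ) of the family of unfolding trees (F_h^v)_{v ∈ V(G)} such that D has at most n·(h+1) nodes and at most 2m·h edges, the nodes of D are partitioned into h+1 layers with each graph vertex represented exactly once per layer, and the edges between two consecutive layers correspond exactly to the edges of G; i.e., merging the unfolding trees of all vertices yields the layered computation DAG of message passing. -/
open scoped Classical

universe u v

/-- A labeled DAG: finitely many nodes, each with a label and a list of children
(parallel edges are allowed), together with a rank function witnessing
acyclicity (children have strictly smaller rank). -/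
structure LDag (L : Type u) where
  size : ℕ
  label : Fin size → L
  children : Fin size → List (Fin size)
  rank : Fin size → ℕ
  rank_lt : ∀ {i j}, j ∈ children i → rank j < rank i

namespace LDag

variable {L : Type u}

/-- The unfolding of a node of a DAG into a rooted labeled tree, obtained by
recursively expanding the node and its children. -/
def unfold (D : LDag L) (p : Fin D.size) : LTree L :=
  .node (D.label p) ((D.children p).attach.map (fun q => D.unfold q.1))
termination_by D.rank p
decreasing_by exact D.rank_lt q.2

/-- Total number of edges of the DAG (counted with multiplicity). -/
def edgeCount (D : LDag L) : ℕ := ∑ p : Fin D.size, (D.children p).length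

end LDag

/-!
Take one copy `(v, i)` of every vertex `v` in each layer `i ≤ h`, and let `(v, i + 1)` point to
the copies `(u, i)` of the neighbours `u` of `v`. By induction on `i`, unfolding `(v, i)`
reproduces the unfolding tree `F_i^v` verbatim. Every layer above the bottom one contributes
`∑ deg = 2m` edges, whence the edge bound `2mh`.
-/

theorem LTree.Iso.refl {L : Type u} : ∀ t : LTree L, LTree.Iso t t
  | .node a ts => .node a (List.forall₂_same.2 fun t _ => LTree.Iso.refl t) (List.Perm.refl ts)
decreasing_by have := List.sizeOf_lt_of_mem ‹t ∈ ts›; simp_wf; omega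

namespace LDag

variable {L : Type u}

theorem unfold_eq_node (D : LDag L) (p : Fin D.size) :
    D.unfold p = .node (D.label p) ((D.children p).map D.unfold) := by
  rw [unfold, List.attach_map_val]

section OfFintype

variable {α : Type v} [Fintype α] (label : α → L) (children : α → List α) (rank : α → ℕ)
  (rank_lt : ∀ {a b}, b ∈ children a → rank b < rank a)

noncomputable def ofFintype : LDag L where
  size := Fintype.card α
  label p := label ((Fintype.equivFin α).symm p)
  children p := (children ((Fintype.equivFin α).symm p)).map (Fintype.equivFin α)
  rank p := rank ((Fintype.equivFin α).symm p)
  rank_lt {p q} hq := by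
    obtain ⟨b, hb, rfl⟩ := List.mem_map.1 hq
    simpa using rank_lt hb

theorem mem_ofFintype_children {p q : Fin (Fintype.card α)} :
    q ∈ (ofFintype label children rank rank_lt).children p ↔
      (Fintype.equivFin α).symm q ∈ children ((Fintype.equivFin α).symm p) := by
  rw [← (Fintype.equivFin α).apply_symm_apply q]
  exact List.mem_map_of_injective (Fintype.equivFin α).injective |>.trans (by simp)

theorem ofFintype_unfold (a : α) :
    (ofFintype label children rank rank_lt).unfold (Fintype.equivFin α a) =
      .node (label a) ((children a).map fun b =>
        (ofFintype label children rank rank_lt).unfold (Fintype.equivFin α b)) := by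
  refine (unfold_eq_node _ _).trans ?_
  simp [ofFintype]

theorem edgeCount_ofFintype :
    (ofFintype label children rank rank_lt).edgeCount = ∑ a, (children a).length := by
  simp only [edgeCount, ofFintype, List.length_map]
  exact (Fintype.equivFin α).symm.sum_comp fun a => (children a).length

end OfFintype

end LDag

namespace SimpleGraph

variable {V : Type u} {X : Type v} [Fintype V] (G : SimpleGraph V) (h : ℕ)

noncomputable def layerChildren (x : V × Fin (h + 1)) : List (V × Fin (h + 1)) :=
  Fin.cases [] (fun i => (G.neighborFinset x.1).toList.map fun u => (u, i.castSucc)) x.2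

variable {G h}

@[simp]
theorem layerChildren_zero (v : V) : G.layerChildren h (v, 0) = [] := rfl

@[simp]
theorem layerChildren_succ (v : V) (i : Fin h) :
    G.layerChildren h (v, i.succ) = (G.neighborFinset v).toList.map fun u => (u, i.castSucc) :=
  rfl

theorem mem_layerChildren {x y : V × Fin (h + 1)} :
    y ∈ G.layerChildren h x ↔ G.Adj x.1 y.1 ∧ (y.2 : ℕ) + 1 = x.2 := by
  obtain ⟨v, j⟩ := x
  obtain ⟨u, k⟩ := y
  induction j using Fin.cases with
  | zero => simp
  | succ i => simp [Fin.ext_iff, eq_comm]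

theorem length_layerChildren (x : V × Fin (h + 1)) :
    (G.layerChildren h x).length = if (x.2 : ℕ) = 0 then 0 else G.degree x.1 := by
  obtain ⟨v, j⟩ := x
  induction j using Fin.cases with
  | zero => simp
  | succ i => simp

theorem sum_length_layerChildren :
    ∑ x, (G.layerChildren h x).length = 2 * G.edgeFinset.card * h := by
  simp only [length_layerChildren]
  rw [Fintype.sum_prod_type, Finset.sum_comm, Fin.sum_univ_succ]
  simp [sum_degrees_eq_twice_card_edges, mul_comm]

theorem val_lt_of_mem_layerChildren {x y : V × Fin (h + 1)} (hy : y ∈ G.layerChildren h x) :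
    (y.2 : ℕ) < x.2 :=
  (mem_layerChildren.1 hy).2 ▸ Nat.lt_add_one _

variable (G h) in
noncomputable def messagePassingDag (μ : V → X) : LDag X :=
  LDag.ofFintype (fun x => μ x.1) (G.layerChildren h) (fun x => (x.2 : ℕ))
    val_lt_of_mem_layerChildren

theorem messagePassingDag_unfold (μ : V → X) (v : V) (j : Fin (h + 1)) :
    (G.messagePassingDag h μ).unfold (Fintype.equivFin _ (v, j)) = G.unfoldingTree μ j v := by
  induction j using Fin.induction generalizing v with
  | zero => exact LDag.ofFintype_unfold _ _ _ val_lt_of_mem_layerChildren _ |>.trans rfl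
  | succ i ih =>
    refine (LDag.ofFintype_unfold _ _ _ val_lt_of_mem_layerChildren _).trans ?_
    simp only [layerChildren_succ, List.map_map, unfoldingTree, Fin.val_succ]
    exact congrArg _ (List.map_congr_left fun u _ => ih u)

end SimpleGraph

/-- For every graph `G` with `n` vertices and `m` edges and
every height `h`, there is a merge DAG `(D, ξ)` of the family of unfolding
trees `(F_h^v)_{v ∈ V(G)}` with at most `n·(h+1)` nodes and at most `2m·h`
edges, whose nodes are partitioned into `h+1` layers with each graph vertex
represented exactly once per layer (witnessed by the equivalence `e`), such
that the edges between two consecutive layers correspond exactly to the edges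
of `G`: the layered computation DAG of message passing. -/
theorem mergeDag_of_unfoldingTrees {V : Type u} {X : Type v} [Fintype V]
    (G : SimpleGraph V) (μ : V → X) (h : ℕ) :
    ∃ (D : LDag X) (ξ : V → Fin D.size) (e : Fin D.size ≃ V × Fin (h + 1)),
      (∀ v : V, LTree.Iso (D.unfold (ξ v)) (G.unfoldingTree μ h v)) ∧
      (∀ v : V, ξ v = e.symm (v, Fin.last h)) ∧
      (∀ p : Fin D.size, D.label p = μ (e p).1) ∧
      (∀ p q : Fin D.size, q ∈ D.children p ↔
        (G.Adj (e p).1 (e q).1 ∧ ((e q).2 : ℕ) + 1 = ((e p).2 : ℕ))) ∧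
      D.size ≤ Fintype.card V * (h + 1) ∧
      D.edgeCount ≤ 2 * G.edgeFinset.card * h := by
  refine ⟨G.messagePassingDag h μ, fun v => Fintype.equivFin _ (v, Fin.last h),
    (Fintype.equivFin _).symm, fun v => ?_, fun v => rfl, fun p => rfl,
    fun p q => (LDag.mem_ofFintype_children _ _ _ SimpleGraph.val_lt_of_mem_layerChildren).trans
      SimpleGraph.mem_layerChildren, ?_, ?_⟩
  · simpa [SimpleGraph.messagePassingDag_unfold] using LTree.Iso.refl _
  · simp [SimpleGraph.messagePassingDag, LDag.ofFintype]
  · rw [SimpleGraph.messagePassingDag, LDag.edgeCount_ofFintype,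
      SimpleGraph.sum_length_layerChildren]
end
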